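/- The example chain satisfies Assumption B̲ but not Assumption B: (a) for every n = 1,2,…, v_{γ^(n)}(0) − m_{γ^(n)} ≥ n, hence sup_{α∈[0,1)} (v_α(0) − m_α) = +∞; (b) for every state x of the chain, liminf_{α↑1} (v_α(x) − m_α) < +∞ (in particular v_{α^(n)}(0) − m_{α^(n)} ≤ 1 for all n). -/

import Mathlib

open Filter Topology

/-- `ε_β := 1 − β`. -/
noncomputable def epsP (β : ℝ) : ℝ := 1 - β

/-- `γ_{β,M} := max{(β+1)/2, 1 − ε_β/(3M)}`. -/
noncomputable def gammaP (β M : ℝ) : ℝ := max ((β + 1) / 2) (1 - epsP β / (3 * M))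

/-- `n*_{β,M} := ⌊log_{γ_{β,M}}(min{1/2, M(1−γ_{β,M})/ε_β})⌋ + 1`. -/
noncomputable def nStar (β M : ℝ) : ℕ :=
  (⌊Real.logb (gammaP β M) (min (1 / 2) (M * (1 - gammaP β M) / epsP β))⌋).toNat + 1

/-- `δ_{β,M} := max{(γ_{β,M}+1)/2, (1 − 1/(ε_β n*_{β,M}))^(1/n*_{β,M})}`. -/
noncomputable def deltaP (β M : ℝ) : ℝ :=
  max ((gammaP β M + 1) / 2)
    ((1 - 1 / (epsP β * (nStar β M : ℝ))) ^ ((1 : ℝ) / (nStar β M : ℝ)))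

/-- `g_{β,M}(α) := ε_β (1 − α^{n*_{β,M}})² / (1 − α)`. -/
noncomputable def gFun (β M α : ℝ) : ℝ := epsP β * (1 - α ^ nStar β M) ^ 2 / (1 - α)

/-- The sequence `α^(1), α^(2), …` of the example: `α^(n+1) := δ_{α^(n), n}`; here
`alphaSeq a1 n = α^(n+1)`, i.e. indices are shifted by one. -/
noncomputable def alphaSeq (a1 : ℝ) : ℕ → ℝ
  | 0 => a1
  | n + 1 => deltaP (alphaSeq a1 n) ((n : ℝ) + 1)

/-- `N(n) := n*_{α^(n), n}` of the example (meaningful for `n ≥ 1`). -/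
noncomputable def Nex (a1 : ℝ) (n : ℕ) : ℕ := nStar (alphaSeq a1 (n - 1)) (n : ℝ)

/-- `ε^(n) := ε_{α^(n)} = 1 − α^(n)` of the example (meaningful for `n ≥ 1`). -/
noncomputable def epsEx (a1 : ℝ) (n : ℕ) : ℝ := epsP (alphaSeq a1 (n - 1))

/-- The deterministic transitions of the example chain: `0 → 0`,
`(n,k) → (n,k+1)` for `k < 2N(n)`, and `(n,2N(n)) → 0`; the state `0` is `none`. -/
noncomputable def stepEx (a1 : ℝ) : Option (ℕ × ℕ) → Option (ℕ × ℕ)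
  | none => none
  | some (n, k) => if k < 2 * Nex a1 n then some (n, k + 1) else none

/-- The one-step costs of the example chain: `c(0) = 1`, `c(n,k) = 1 − ε^(n)` for
`k ≤ N(n)` and `c(n,k) = 1 + ε^(n)` for `N(n) < k ≤ 2N(n)`. -/
noncomputable def costEx (a1 : ℝ) : Option (ℕ × ℕ) → ℝ
  | none => 1
  | some (n, k) => if k ≤ Nex a1 n then 1 - epsEx a1 n else 1 + epsEx a1 n

/-- `v_α(x) := Σ_{t≥0} α^t c(x_t)`, the discounted value of the example chain
started at `x`. -/
noncomputable def vEx (a1 α : ℝ) (x : Option (ℕ × ℕ)) : ℝ :=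
  ∑' t : ℕ, α ^ t * costEx a1 ((stepEx a1)^[t] x)

/-- The genuine states of the example chain:
`{0} ∪ {(n,k) : n ≥ 1, 1 ≤ k ≤ 2N(n)}`. -/
def validEx (a1 : ℝ) : Set (Option (ℕ × ℕ)) :=
  {none} ∪ {s | ∃ n k : ℕ, 1 ≤ n ∧ 1 ≤ k ∧ k ≤ 2 * Nex a1 n ∧ s = some (n, k)}

/-- `m_α := inf_{x ∈ X} v_α(x)` over the states of the example chain. -/
noncomputable def mEx (a1 α : ℝ) : ℝ := sInf (vEx a1 α '' validEx a1)

/-! At the state `0` the value is `(1 - α)⁻¹`, and inside block `n` the cheapest state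
is `(n, 1)`, with `v_α(n, 1) = (1 - α)⁻¹ - g_n(α)`, where
`g_n(α) = ε⁽ⁿ⁾ (1 - α ^ N(n))² / (1 - α)` is `gFun`. Hence `v_α(0) - m_α` is governed by
`sup_n g_n(α)`.

At `α = γ⁽ⁿ⁾` the choice of `N(n)` gives `γ⁽ⁿ⁾ ^ N(n) < 1/3` while `1 - γ⁽ⁿ⁾ = ε⁽ⁿ⁾ / (3n)`,
so `g_n(γ⁽ⁿ⁾) ≥ n`. At `α = α⁽ᵐ⁾` every `g_n` is at most `1`: for `n ≥ m` because
`ε⁽ⁿ⁾ = 1 - α⁽ⁿ⁾ ≤ 1 - α`, and for `n < m` because `α ≥ α⁽ⁿ⁺¹⁾ = δ` forces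
`1 - α ^ N ≤ 1 / (ε⁽ⁿ⁾ N)` while Bernoulli gives `1 - α ^ N ≤ N (1 - α)`. As `α⁽ᵐ⁾ ↑ 1`,
this bounds the liminf at every state.
-/

section Parameters

variable {β M : ℝ}

lemma gammaP_eq (hβ : β ≤ 1) (hM : 1 ≤ M) : gammaP β M = 1 - epsP β / (3 * M) := by
  have hε : 0 ≤ epsP β := by simp only [epsP]; linarith
  have : epsP β / (3 * M) ≤ epsP β / 2 := by gcongr; linarith
  rw [gammaP, max_eq_right]
  simp only [epsP] at this ⊢
  linarith

lemma one_sub_gammaP (hβ : β ≤ 1) (hM : 1 ≤ M) : 1 - gammaP β M = epsP β / (3 * M) := by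
  rw [gammaP_eq hβ hM]; ring

lemma le_gammaP (hβ : β ≤ 1) : β ≤ gammaP β M :=
  le_max_of_le_left (by linarith)

lemma gammaP_mem (hβ0 : 0 ≤ β) (hβ1 : β < 1) (hM : 1 ≤ M) :
    gammaP β M ∈ Set.Ico 0 1 := by
  have hε : 0 < epsP β / (3 * M) := div_pos (by simp only [epsP]; linarith) (by linarith)
  exact ⟨hβ0.trans (le_gammaP hβ1.le), by linarith [one_sub_gammaP hβ1.le hM]⟩

lemma nStar_pos : 0 < nStar β M := Nat.succ_pos _

lemma gammaP_pow_nStar_lt (hβ0 : 0 ≤ β) (hβ1 : β < 1) (hM : 1 ≤ M) :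
    gammaP β M ^ nStar β M < 1 / 3 := by
  have hγ0 : 0 < gammaP β M := lt_max_of_lt_left (by linarith)
  have hγ1 := (gammaP_mem hβ0 hβ1 hM).2
  have hmin : min (1 / 2 : ℝ) (M * (1 - gammaP β M) / epsP β) = 1 / 3 := by
    have hε : epsP β ≠ 0 := by simp only [epsP]; linarith
    rw [one_sub_gammaP hβ1.le hM, show M * (epsP β / (3 * M)) / epsP β = 1 / 3 by
      field_simp]
    norm_num
  have hlog : Real.logb (gammaP β M) (1 / 3) < nStar β M := by
    rw [nStar, hmin]
    set L := Real.logb (gammaP β M) (1 / 3)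
    have h : (⌊L⌋ : ℝ) ≤ (⌊L⌋.toNat : ℝ) := by exact_mod_cast Int.self_le_toNat _
    push_cast
    linarith [Int.lt_floor_add_one L]
  calc gammaP β M ^ nStar β M = gammaP β M ^ (nStar β M : ℝ) := (Real.rpow_natCast _ _).symm
    _ < gammaP β M ^ Real.logb (gammaP β M) (1 / 3) :=
      Real.rpow_lt_rpow_of_exponent_gt hγ0 hγ1 hlog
    _ = 1 / 3 := Real.rpow_logb hγ0 hγ1.ne (by norm_num)

lemma two_mul_lt_epsP_mul_nStar (hβ0 : 0 ≤ β) (hβ1 : β < 1) (hM : 1 ≤ M) :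
    2 * M < epsP β * nStar β M := by
  have hγ0 := (gammaP_mem hβ0 hβ1 hM).1
  -- Bernoulli: `1 - n* (1 - γ) ≤ γ ^ n* < 1/3`, and `1 - γ = ε / (3M)`.
  have hBernoulli := one_add_mul_le_pow (a := gammaP β M - 1) (by linarith) (nStar β M)
  rw [add_sub_cancel] at hBernoulli
  have h := gammaP_pow_nStar_lt hβ0 hβ1 hM
  have hγ : gammaP β M = 1 - epsP β / (3 * M) := gammaP_eq hβ1.le hM
  rw [hγ] at hBernoulli h
  have : (2 : ℝ) / 3 < nStar β M * (epsP β / (3 * M)) := by linarith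
  rw [mul_div_assoc', lt_div_iff₀ (by linarith)] at this
  linarith

lemma one_le_epsP_mul_nStar (hβ0 : 0 ≤ β) (hβ1 : β < 1) (hM : 1 ≤ M) :
    1 ≤ epsP β * nStar β M := by
  linarith [two_mul_lt_epsP_mul_nStar hβ0 hβ1 hM]

lemma deltaP_lt_one (hβ0 : 0 ≤ β) (hβ1 : β < 1) (hM : 1 ≤ M) : deltaP β M < 1 := by
  have h := one_le_epsP_mul_nStar hβ0 hβ1 hM
  have hn : (0 : ℝ) < nStar β M := Nat.cast_pos.2 nStar_pos
  refine max_lt (by linarith [(gammaP_mem hβ0 hβ1 hM).2]) (Real.rpow_lt_one ?_ ?_ (by positivity))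
  · rw [sub_nonneg]; exact div_le_one_of_le₀ h (by linarith)
  · have : 0 < 1 / (epsP β * nStar β M) := by positivity
    linarith

lemma le_pow_nStar_of_deltaP_le {α : ℝ} (hβ0 : 0 ≤ β) (hβ1 : β < 1) (hM : 1 ≤ M)
    (hα : deltaP β M ≤ α) : 1 - 1 / (epsP β * nStar β M) ≤ α ^ nStar β M := by
  set b := 1 - 1 / (epsP β * nStar β M)
  have h := one_le_epsP_mul_nStar hβ0 hβ1 hM
  have hb : 0 ≤ b := sub_nonneg.2 (div_le_one_of_le₀ h (by linarith))
  have hn : (nStar β M : ℝ) ≠ 0 := (Nat.cast_pos.2 nStar_pos).ne'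
  calc b = (b ^ (1 / (nStar β M : ℝ))) ^ nStar β M := by
        rw [← Real.rpow_natCast, ← Real.rpow_mul hb, one_div_mul_cancel hn, Real.rpow_one]
    _ ≤ α ^ nStar β M := pow_le_pow_left₀ (by positivity) ((le_max_right _ _).trans hα) _

lemma le_gFun_gammaP (hβ0 : 0 ≤ β) (hβ1 : β < 1) (hM : 1 ≤ M) :
    M ≤ gFun β M (gammaP β M) := by
  have h := gammaP_pow_nStar_lt hβ0 hβ1 hM
  have hpow := pow_nonneg (gammaP_mem hβ0 hβ1 hM).1 (nStar β M)
  have hε : epsP β ≠ 0 := by simp only [epsP]; linarith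
  have hgFun : gFun β M (gammaP β M) = 3 * M * (1 - gammaP β M ^ nStar β M) ^ 2 := by
    rw [gFun, one_sub_gammaP hβ1.le hM]
    field_simp
  have hsq : 4 / 9 ≤ (1 - gammaP β M ^ nStar β M) ^ 2 := by nlinarith
  rw [hgFun]
  nlinarith

lemma gFun_le_one_of_epsP_le {α : ℝ} (hα0 : 0 ≤ α) (hα1 : α < 1) (h : epsP β ≤ 1 - α) :
    gFun β M α ≤ 1 := by
  have hpow := pow_le_one₀ hα0 hα1.le (n := nStar β M)
  have hs : (1 - α ^ nStar β M) ^ 2 ≤ 1 := by nlinarith [pow_nonneg hα0 (nStar β M)]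
  rw [gFun, div_le_one (by linarith)]
  nlinarith [sq_nonneg (1 - α ^ nStar β M)]

lemma gFun_le_one_of_deltaP_le {α : ℝ} (hβ0 : 0 ≤ β) (hβ1 : β < 1) (hM : 1 ≤ M)
    (hα : deltaP β M ≤ α) (hα1 : α < 1) : gFun β M α ≤ 1 := by
  have hα0 : 0 ≤ α := by
    have hδ : (gammaP β M + 1) / 2 ≤ deltaP β M := le_max_left _ _
    linarith [(gammaP_mem hβ0 hβ1 hM).1]
  set N := nStar β M
  set s := 1 - α ^ N
  have hs0 : 0 ≤ s := sub_nonneg.2 (pow_le_one₀ hα0 hα1.le)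
  have hε : 0 ≤ epsP β := by simp only [epsP]; linarith
  have hεN : epsP β * s * N ≤ 1 := by
    have h := le_pow_nStar_of_deltaP_le hβ0 hβ1 hM hα
    have hpos : 0 < epsP β * N := by linarith [one_le_epsP_mul_nStar hβ0 hβ1 hM]
    have : s ≤ 1 / (epsP β * N) := by linarith
    rw [le_div_iff₀ hpos] at this
    linarith
  have hBernoulli : s ≤ N * (1 - α) := by
    have := one_add_mul_le_pow (a := α - 1) (by linarith) N
    rw [add_sub_cancel] at this
    linarith
  rw [gFun, div_le_one (by linarith)]
  nlinarith [mul_le_mul_of_nonneg_left hBernoulli (mul_nonneg hε hs0)]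

end Parameters

section Sequence

variable {a1 : ℝ}

lemma alphaSeq_mem (ha1 : a1 ∈ Set.Ico 0 1) (n : ℕ) : alphaSeq a1 n ∈ Set.Ico 0 1 := by
  induction n with
  | zero => exact ha1
  | succ n ih =>
    have hM : (1 : ℝ) ≤ n + 1 := by linarith [(n.cast_nonneg : (0 : ℝ) ≤ n)]
    have hδ : (gammaP (alphaSeq a1 n) (n + 1) + 1) / 2 ≤ alphaSeq a1 (n + 1) :=
      le_max_left _ _
    exact ⟨by linarith [(gammaP_mem ih.1 ih.2 hM).1], deltaP_lt_one ih.1 ih.2 hM⟩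

lemma one_sub_alphaSeq_succ_le (ha1 : a1 ∈ Set.Ico 0 1) (n : ℕ) :
    1 - alphaSeq a1 (n + 1) ≤ (1 - alphaSeq a1 n) / 2 := by
  have hδ : (gammaP (alphaSeq a1 n) (n + 1) + 1) / 2 ≤ alphaSeq a1 (n + 1) := le_max_left _ _
  linarith [le_gammaP (M := (n : ℝ) + 1) (alphaSeq_mem ha1 n).2.le]

lemma alphaSeq_mono (ha1 : a1 ∈ Set.Ico 0 1) : Monotone (alphaSeq a1) :=
  monotone_nat_of_le_succ fun n => by
    linarith [one_sub_alphaSeq_succ_le ha1 n, (alphaSeq_mem ha1 n).2]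

lemma one_sub_alphaSeq_le (ha1 : a1 ∈ Set.Ico 0 1) (n : ℕ) :
    1 - alphaSeq a1 n ≤ (1 / 2) ^ n := by
  induction n with
  | zero => simp only [alphaSeq, pow_zero]; linarith [ha1.1]
  | succ n ih => rw [pow_succ]; linarith [one_sub_alphaSeq_succ_le ha1 n]

lemma tendsto_alphaSeq (ha1 : a1 ∈ Set.Ico 0 1) : Tendsto (alphaSeq a1) atTop (𝓝[<] 1) := by
  refine tendsto_nhdsWithin_iff.2 ⟨?_, .of_forall fun n => (alphaSeq_mem ha1 n).2⟩
  have hlower : Tendsto (fun n : ℕ => 1 - (1 / 2 : ℝ) ^ n) atTop (𝓝 1) := by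
    simpa using tendsto_const_nhds.sub
      (tendsto_pow_atTop_nhds_zero_of_lt_one (r := (1 / 2 : ℝ)) (by norm_num) (by norm_num))
  exact tendsto_of_tendsto_of_tendsto_of_le_of_le hlower tendsto_const_nhds
    (fun n => by linarith [one_sub_alphaSeq_le ha1 n]) (fun n => (alphaSeq_mem ha1 n).2.le)

lemma gFun_alphaSeq_le_one (ha1 : a1 ∈ Set.Ico 0 1) (n m : ℕ) :
    gFun (alphaSeq a1 n) (n + 1) (alphaSeq a1 m) ≤ 1 := by
  obtain ⟨hβ0, hβ1⟩ := alphaSeq_mem ha1 n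
  obtain ⟨hα0, hα1⟩ := alphaSeq_mem ha1 m
  rcases le_or_gt m n with hmn | hnm
  · exact gFun_le_one_of_epsP_le hα0 hα1 (by
      simp only [epsP]; linarith [alphaSeq_mono ha1 hmn])
  · have hM : (1 : ℝ) ≤ n + 1 := by linarith [(n.cast_nonneg : (0 : ℝ) ≤ n)]
    exact gFun_le_one_of_deltaP_le hβ0 hβ1 hM (alphaSeq_mono ha1 hnm) hα1

end Sequence

lemma tsum_pow_mul_eq_of_forall_ge {α : ℝ} (hα0 : 0 ≤ α) (hα1 : α < 1) {f : ℕ → ℝ} {T : ℕ}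
    (hf : ∀ t, T ≤ t → f t = 1) :
    ∑' t, α ^ t * f t = (1 - α)⁻¹ + ∑ t ∈ Finset.range T, α ^ t * (f t - 1) := by
  have hzero : ∀ t ∉ Finset.range T, α ^ t * (f t - 1) = 0 := fun t ht => by
    rw [hf t (by simpa using ht), sub_self, mul_zero]
  calc ∑' t, α ^ t * f t = ∑' t, (α ^ t + α ^ t * (f t - 1)) := by congr 1; ext t; ring
    _ = _ := by
      rw [(summable_geometric_of_lt_one hα0 hα1).tsum_add (summable_of_ne_finset_zero hzero),
        tsum_geometric_of_lt_one hα0 hα1, tsum_eq_sum hzero]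

section Chain

variable {a1 α : ℝ}

lemma stepEx_iterate_some {n k : ℕ} (hk : k ≤ 2 * Nex a1 n) (t : ℕ) :
    (stepEx a1)^[t] (some (n, k)) = if k + t ≤ 2 * Nex a1 n then some (n, k + t) else none := by
  induction t with
  | zero => simp [hk]
  | succ t ih =>
    rw [Function.iterate_succ_apply', ih]
    rcases lt_trichotomy (k + t) (2 * Nex a1 n) with h | h | h
    · rw [if_pos h.le, if_pos (by omega)]
      simp [stepEx, h, add_assoc]
    · rw [if_pos h.le, if_neg (by omega)]
      simp [stepEx, h]
    · rw [if_neg (by omega), if_neg (by omega)]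
      rfl

lemma vEx_none (hα0 : 0 ≤ α) (hα1 : α < 1) : vEx a1 α none = (1 - α)⁻¹ := by
  have hfix (t : ℕ) : (stepEx a1)^[t] none = none := Function.iterate_fixed rfl t
  simpa [vEx, hfix, costEx] using tsum_geometric_of_lt_one hα0 hα1

lemma vEx_some (hα0 : 0 ≤ α) (hα1 : α < 1) {n k : ℕ} (hk : k ≤ 2 * Nex a1 n) :
    vEx a1 α (some (n, k)) = (1 - α)⁻¹ +
      ∑ t ∈ Finset.range (2 * Nex a1 n + 1 - k), α ^ t * (costEx a1 (some (n, k + t)) - 1) := by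
  rw [vEx, tsum_pow_mul_eq_of_forall_ge hα0 hα1 (T := 2 * Nex a1 n + 1 - k) fun t ht => by
    rw [stepEx_iterate_some hk, if_neg (by omega)]; rfl]
  refine congrArg _ (Finset.sum_congr rfl fun t ht => ?_)
  rw [stepEx_iterate_some hk, if_pos (by simp at ht; omega)]

lemma costEx_some_sub_one (n j : ℕ) :
    costEx a1 (some (n, j)) - 1 = if j ≤ Nex a1 n then -epsEx a1 n else epsEx a1 n := by
  simp only [costEx]; split <;> ring

lemma vEx_some_of_le_Nex (hα0 : 0 ≤ α) (hα1 : α < 1) {n k : ℕ} (hk : k ≤ Nex a1 n) :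
    vEx a1 α (some (n, k)) =
      (1 - α)⁻¹ - epsEx a1 n * ∑ t ∈ Finset.range (Nex a1 n + 1 - k), α ^ t
        + epsEx a1 n * α ^ (Nex a1 n + 1 - k) * ∑ t ∈ Finset.range (Nex a1 n), α ^ t := by
  rw [vEx_some hα0 hα1 (by omega),
    show 2 * Nex a1 n + 1 - k = Nex a1 n + 1 - k + Nex a1 n by omega, Finset.sum_range_add]
  have hfirst : ∀ t ∈ Finset.range (Nex a1 n + 1 - k),
      α ^ t * (costEx a1 (some (n, k + t)) - 1) = -(epsEx a1 n * α ^ t) := fun t ht => by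
    rw [costEx_some_sub_one, if_pos (by simp at ht; omega)]; ring
  have hsecond : ∀ i ∈ Finset.range (Nex a1 n),
      α ^ (Nex a1 n + 1 - k + i) * (costEx a1 (some (n, k + (Nex a1 n + 1 - k + i))) - 1) =
        epsEx a1 n * α ^ (Nex a1 n + 1 - k) * α ^ i := fun i _ => by
    rw [costEx_some_sub_one, if_neg (by omega), pow_add]; ring
  rw [Finset.sum_congr rfl hfirst, Finset.sum_congr rfl hsecond, Finset.sum_neg_distrib,
    ← Finset.mul_sum, ← Finset.mul_sum]
  ring

lemma vEx_some_one (hα0 : 0 ≤ α) (hα1 : α < 1) (n : ℕ) :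
    vEx a1 α (some (n, 1)) = (1 - α)⁻¹ - gFun (alphaSeq a1 (n - 1)) n α := by
  have hgFun : gFun (alphaSeq a1 (n - 1)) n α =
      epsEx a1 n * (1 - α ^ Nex a1 n) ^ 2 / (1 - α) := rfl
  have hpow : α ^ Nex a1 n = 1 - (∑ t ∈ Finset.range (Nex a1 n), α ^ t) * (1 - α) := by
    rw [geom_sum_mul_neg]; ring
  have hα : 1 - α ≠ 0 := by linarith
  rw [vEx_some_of_le_Nex hα0 hα1 nStar_pos, Nat.add_sub_cancel, hgFun, hpow]
  field_simp
  ring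

lemma vEx_some_one_le (ha1 : a1 ∈ Set.Ico 0 1) (hα0 : 0 ≤ α) (hα1 : α < 1) {n k : ℕ}
    (hk1 : 1 ≤ k) (hk : k ≤ 2 * Nex a1 n) : vEx a1 α (some (n, 1)) ≤ vEx a1 α (some (n, k)) := by
  have hε : 0 ≤ epsEx a1 n := sub_nonneg.2 (alphaSeq_mem ha1 _).2.le
  rcases le_or_gt k (Nex a1 n) with hkN | hkN
  · rw [vEx_some_of_le_Nex hα0 hα1 nStar_pos, vEx_some_of_le_Nex hα0 hα1 hkN,
      Nat.add_sub_cancel]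
    have hS : ∑ t ∈ Finset.range (Nex a1 n + 1 - k), α ^ t ≤
        ∑ t ∈ Finset.range (Nex a1 n), α ^ t :=
      Finset.sum_le_sum_of_subset_of_nonneg (Finset.range_subset_range.2 (by omega))
        fun t _ _ => pow_nonneg hα0 t
    have hpow : α ^ Nex a1 n ≤ α ^ (Nex a1 n + 1 - k) :=
      pow_le_pow_of_le_one hα0 hα1.le (by omega)
    have hS0 : 0 ≤ ∑ t ∈ Finset.range (Nex a1 n), α ^ t :=
      Finset.sum_nonneg fun t _ => pow_nonneg hα0 t
    nlinarith [mul_le_mul_of_nonneg_left hS hε,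
      mul_le_mul_of_nonneg_right (mul_le_mul_of_nonneg_left hpow hε) hS0]
  · have hgFun : 0 ≤ gFun (alphaSeq a1 (n - 1)) n α :=
      div_nonneg (mul_nonneg hε (sq_nonneg _)) (by linarith)
    have hsum : 0 ≤ ∑ t ∈ Finset.range (2 * Nex a1 n + 1 - k),
        α ^ t * (costEx a1 (some (n, k + t)) - 1) := Finset.sum_nonneg fun t _ => by
      rw [costEx_some_sub_one, if_neg (by omega)]
      exact mul_nonneg (pow_nonneg hα0 t) hε
    rw [vEx_some_one hα0 hα1, vEx_some hα0 hα1 hk]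
    linarith

lemma vEx_some_le (ha1 : a1 ∈ Set.Ico 0 1) (hα0 : 0 ≤ α) (hα1 : α < 1) {n k : ℕ}
    (hk1 : 1 ≤ k) (hk : k ≤ 2 * Nex a1 n) :
    vEx a1 α (some (n, k)) ≤ (1 - α)⁻¹ + 2 * Nex a1 n := by
  have hε : epsEx a1 n ∈ Set.Icc 0 1 := by
    obtain ⟨h0, h1⟩ := alphaSeq_mem ha1 (n - 1)
    exact ⟨sub_nonneg.2 h1.le, by simp only [epsEx, epsP]; linarith⟩
  have hterm (t : ℕ) : α ^ t * (costEx a1 (some (n, k + t)) - 1) ≤ 1 := by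
    have hc : costEx a1 (some (n, k + t)) - 1 ≤ 1 := by
      rw [costEx_some_sub_one]; split <;> linarith [hε.1, hε.2]
    have hpow : α ^ t ≤ 1 := pow_le_one₀ hα0 hα1.le
    nlinarith [pow_nonneg hα0 t, hε.1]
  calc vEx a1 α (some (n, k))
      ≤ (1 - α)⁻¹ + ∑ t ∈ Finset.range (2 * Nex a1 n + 1 - k), (1 : ℝ) := by
        rw [vEx_some hα0 hα1 hk]
        gcongr with t
        exact hterm t
    _ ≤ (1 - α)⁻¹ + 2 * Nex a1 n := by
        simp only [Finset.sum_const, Finset.card_range, nsmul_eq_mul, mul_one]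
        gcongr
        exact_mod_cast (by omega : 2 * Nex a1 n + 1 - k ≤ 2 * Nex a1 n)

end Chain

section Infimum

variable {a1 α : ℝ}

lemma costEx_nonneg (ha1 : a1 ∈ Set.Ico 0 1) (x : Option (ℕ × ℕ)) : 0 ≤ costEx a1 x := by
  match x with
  | none => exact zero_le_one
  | some (n, k) =>
    obtain ⟨h0, h1⟩ := alphaSeq_mem ha1 (n - 1)
    simp only [costEx, epsEx, epsP]
    split <;> linarith

lemma mEx_le_vEx (ha1 : a1 ∈ Set.Ico 0 1) (hα0 : 0 ≤ α) {x : Option (ℕ × ℕ)}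
    (hx : x ∈ validEx a1) : mEx a1 α ≤ vEx a1 α x := by
  refine csInf_le ⟨0, ?_⟩ ⟨x, hx, rfl⟩
  rintro _ ⟨y, -, rfl⟩
  exact tsum_nonneg fun t => mul_nonneg (pow_nonneg hα0 t) (costEx_nonneg ha1 _)

lemma inv_one_sub_sub_le_mEx (ha1 : a1 ∈ Set.Ico 0 1) (hα0 : 0 ≤ α) (hα1 : α < 1) {C : ℝ}
    (hC : 0 ≤ C) (h : ∀ n : ℕ, 1 ≤ n → gFun (alphaSeq a1 (n - 1)) n α ≤ C) :
    (1 - α)⁻¹ - C ≤ mEx a1 α := by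
  refine le_csInf ⟨_, none, Or.inl rfl, rfl⟩ ?_
  rintro _ ⟨x, (rfl | ⟨n, k, hn, hk1, hk, rfl⟩), rfl⟩
  · rw [vEx_none hα0 hα1]; linarith
  · linarith [vEx_some_one_le ha1 hα0 hα1 hk1 hk, vEx_some_one (a1 := a1) hα0 hα1 n, h n hn]

lemma le_vEx_none_sub_mEx_gammaP (ha1 : a1 ∈ Set.Ico 0 1) {n : ℕ} (hn : 1 ≤ n) :
    (n : ℝ) ≤ vEx a1 (gammaP (alphaSeq a1 (n - 1)) n) none -
      mEx a1 (gammaP (alphaSeq a1 (n - 1)) n) := by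
  obtain ⟨hβ0, hβ1⟩ := alphaSeq_mem ha1 (n - 1)
  have hM : (1 : ℝ) ≤ n := by exact_mod_cast hn
  obtain ⟨hγ0, hγ1⟩ := gammaP_mem hβ0 hβ1 hM
  have hm := mEx_le_vEx ha1 hγ0 (x := some (n, 1))
    (Or.inr ⟨n, 1, hn, le_rfl, by have : 0 < Nex a1 n := nStar_pos; omega, rfl⟩)
  rw [vEx_some_one hγ0 hγ1] at hm
  rw [vEx_none hγ0 hγ1]
  linarith [le_gFun_gammaP hβ0 hβ1 hM]

lemma vEx_none_sub_mEx_alphaSeq_le_one (ha1 : a1 ∈ Set.Ico 0 1) (m : ℕ) :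
    vEx a1 (alphaSeq a1 m) none - mEx a1 (alphaSeq a1 m) ≤ 1 := by
  obtain ⟨hα0, hα1⟩ := alphaSeq_mem ha1 m
  have h := inv_one_sub_sub_le_mEx ha1 hα0 hα1 zero_le_one fun n hn => by
    obtain ⟨n, rfl⟩ := Nat.exists_eq_add_of_le' hn
    simpa using gFun_alphaSeq_le_one ha1 n m
  rw [vEx_none hα0 hα1]
  linarith

lemma exists_vEx_sub_mEx_alphaSeq_le (ha1 : a1 ∈ Set.Ico 0 1) {x : Option (ℕ × ℕ)}
    (hx : x ∈ validEx a1) :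
    ∃ C : ℝ, ∀ m, vEx a1 (alphaSeq a1 m) x - mEx a1 (alphaSeq a1 m) ≤ C := by
  rcases hx with rfl | ⟨n, k, -, hk1, hk, rfl⟩
  · exact ⟨1, vEx_none_sub_mEx_alphaSeq_le_one ha1⟩
  · refine ⟨2 * Nex a1 n + 1, fun m => ?_⟩
    obtain ⟨hα0, hα1⟩ := alphaSeq_mem ha1 m
    have h := vEx_none_sub_mEx_alphaSeq_le_one ha1 m
    rw [vEx_none hα0 hα1] at h
    linarith [vEx_some_le ha1 hα0 hα1 hk1 hk]

end Infimum

lemma EReal.iSup_coe_eq_top_of_not_bddAbove {ι : Sort*} {f : ι → ℝ}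
    (hf : ¬BddAbove (Set.range f)) : ⨆ i, (f i : EReal) = ⊤ := by
  refine iSup_eq_top.2 fun b hb => ?_
  obtain ⟨q, hbq, -⟩ := EReal.exists_rat_btwn_of_lt hb
  obtain ⟨_, ⟨i, rfl⟩, hi⟩ := not_bddAbove_iff.1 hf q
  exact ⟨i, hbq.trans (EReal.coe_lt_coe_iff.2 hi)⟩

/-- Proposition 4.2: the example chain satisfies Assumption B̲ but not
Assumption B: (a) `v_{γ^(n)}(0) − m_{γ^(n)} ≥ n` for every `n ≥ 1`, hence
`sup_{α ∈ [0,1)} (v_α(0) − m_α) = +∞`; (b) for every state `x` of the chain,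
`liminf_{α↑1} (v_α(x) − m_α) < +∞`; in particular
`v_{α^(n)}(0) − m_{α^(n)} ≤ 1` for all `n ≥ 1`.  (Here `α^(n) = alphaSeq a1 (n-1)` and
`γ^(n) = gammaP (alphaSeq a1 (n-1)) n`.) -/
theorem stmt19 (a1 : ℝ) (ha1 : a1 ∈ Set.Ico (1 / 2 : ℝ) 1) :
    (∀ n : ℕ, 1 ≤ n →
      (n : ℝ) ≤ vEx a1 (gammaP (alphaSeq a1 (n - 1)) (n : ℝ)) none -
        mEx a1 (gammaP (alphaSeq a1 (n - 1)) (n : ℝ))) ∧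
    (⨆ α : {α : ℝ // α ∈ Set.Ico (0 : ℝ) 1},
      ((vEx a1 (α : ℝ) none - mEx a1 (α : ℝ) : ℝ) : EReal)) = ⊤ ∧
    (∀ x ∈ validEx a1,
      Filter.liminf (fun α : ℝ => ((vEx a1 α x - mEx a1 α : ℝ) : EReal)) (𝓝[<] 1) < ⊤) ∧
    (∀ n : ℕ, 1 ≤ n →
      vEx a1 (alphaSeq a1 (n - 1)) none - mEx a1 (alphaSeq a1 (n - 1)) ≤ 1) := by
  have ha1' : a1 ∈ Set.Ico (0 : ℝ) 1 := ⟨by linarith [ha1.1], ha1.2⟩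
  refine ⟨fun n hn => le_vEx_none_sub_mEx_gammaP ha1' hn, ?_, fun x hx => ?_,
    fun n _ => vEx_none_sub_mEx_alphaSeq_le_one ha1' (n - 1)⟩
  · refine EReal.iSup_coe_eq_top_of_not_bddAbove (not_bddAbove_iff.2 fun r => ?_)
    obtain ⟨n, hn⟩ := exists_nat_gt r
    obtain ⟨hβ0, hβ1⟩ := alphaSeq_mem ha1' n
    have hM : (1 : ℝ) ≤ n + 1 := by linarith [(n.cast_nonneg : (0 : ℝ) ≤ n)]
    have h := le_vEx_none_sub_mEx_gammaP ha1' (n := n + 1) (by omega)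
    simp only [Nat.add_sub_cancel, Nat.cast_add, Nat.cast_one] at h
    exact ⟨_, ⟨⟨_, gammaP_mem hβ0 hβ1 hM⟩, rfl⟩, by linarith⟩
  · obtain ⟨C, hC⟩ := exists_vEx_sub_mEx_alphaSeq_le ha1' hx
    have hfreq : ∃ᶠ α in 𝓝[<] (1 : ℝ), ((vEx a1 α x - mEx a1 α : ℝ) : EReal) ≤ C :=
      (tendsto_alphaSeq ha1').frequently
        (.of_forall fun m => EReal.coe_le_coe_iff.2 (hC m))
    exact (liminf_le_of_frequently_le' hfreq).trans_lt (EReal.coe_lt_top C)
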